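/- With S₀, S₁ the parity-based partition of S = L^m ⊆ (Z/4Z)^{2m} (S₀ consists of products of L₁'s and L₂'s with the number of L₁-factors congruent to m mod 2, S₁ the complementary parity), for z ∈ (Z/4Z)^{2m}: ν_{S₀}(z) + ν_{S₁}(z) = 0 if some coordinate z_i ∈ {(0,2),(2,0),(2,2)}; otherwise, with u,v,w defined from the types N₁₁,N₁₂,N₂₁ of the coordinates of z, it equals 0 if u+v is odd and 4^{m−u−v+w} if u+v is even. -/
import Mathlib


open Finset

abbrev G4 : Type := ZMod 4 × ZMod 4

def L1 : Finset G4 := {(0,0),(0,1),(1,0)}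

def L2 : Finset G4 := {(3,3)}

def Zset : Finset G4 := {(0,2),(2,0),(2,2)}

def N11 : Finset G4 := {(0,1),(0,3),(1,0),(3,0),(1,3),(3,1)}

def N12 : Finset G4 := {(1,1),(1,2),(2,1)}

def N21 : Finset G4 := {(3,3),(3,2),(2,3)}

/-- The number of coordinates of `z` lying in `A`. -/
def cnt {m : ℕ} (A : Finset G4) (z : Fin m → G4) : ℕ :=
  (univ.filter fun i => z i ∈ A).card

/-- `E_{m,i}`: the union of all products of `i` copies of `L₁` and `m - i` copies of `L₂`. -/
def E (m i : ℕ) : Finset (Fin m → G4) :=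
  univ.filter fun x => (∀ j, x j ∈ L1 ∪ L2) ∧ cnt L1 x = i

/-- `S₀ = ∪ {E_{m,i} : i ≡ m (mod 2)}`. -/
def S0 (m : ℕ) : Finset (Fin m → G4) :=
  ((range (m + 1)).filter fun i => i % 2 = m % 2).biUnion (E m)

/-- `S₁ = ∪ {E_{m,i} : i ≢ m (mod 2)}`. -/
def S1 (m : ℕ) : Finset (Fin m → G4) :=
  ((range (m + 1)).filter fun i => ¬ i % 2 = m % 2).biUnion (E m)

/-- `ν_A(y)`, the number of pairs `(a,b) ∈ A × A` with `a - b = y`. -/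
def nu {G : Type*} [AddCommGroup G] [DecidableEq G] (A : Finset G) (y : G) : ℕ :=
  ((A ×ˢ A).filter fun p => p.1 - p.2 = y).card

lemma coord_diff : ∀ p q : G4, p ∈ L1 ∪ L2 → q ∈ L1 ∪ L2 → p - q ∉ Zset := by decide

lemma coord_parity : ∀ p q : G4, p ∈ L1 ∪ L2 → q ∈ L1 ∪ L2 →
    ((if p ∈ L1 then 1 else 0) + (if q ∈ L1 then 1 else 0)) % 2
      = ((if p - q ∈ N12 then 1 else 0) + (if p - q ∈ N21 then 1 else 0)) % 2 := by decide

lemma coord_partition : ∀ r : G4, r ∉ Zset →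
    ((if r = 0 then 1 else 0) + ((if r ∈ N11 then 1 else 0)
      + ((if r ∈ N12 then 1 else 0) + (if r ∈ N21 then 1 else 0)))) = 1 := by decide

lemma coord_card : ∀ r : G4, r ∉ Zset →
    (((L1 ∪ L2) ×ˢ (L1 ∪ L2)).filter fun pq => pq.1 - pq.2 = r).card
      = if r = 0 then 4 else 1 := by decide

lemma cnt_le {m : ℕ} (A : Finset G4) (z : Fin m → G4) : cnt A z ≤ m := by
  classical
  calc cnt A z ≤ (univ : Finset (Fin m)).card := card_filter_le _ _
  _ = m := by simp

lemma mem_S0 {m : ℕ} {x : Fin m → G4} :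
    x ∈ S0 m ↔ (∀ j, x j ∈ L1 ∪ L2) ∧ cnt L1 x % 2 = m % 2 := by
  simp only [S0, mem_biUnion, mem_filter, mem_range, E, mem_univ, true_and]
  constructor
  · rintro ⟨i, ⟨-, hp⟩, hL, rfl⟩; exact ⟨hL, hp⟩
  · rintro ⟨hL, hp⟩; exact ⟨cnt L1 x, ⟨Nat.lt_succ_of_le (cnt_le _ _), hp⟩, hL, rfl⟩

lemma mem_S1 {m : ℕ} {x : Fin m → G4} :
    x ∈ S1 m ↔ (∀ j, x j ∈ L1 ∪ L2) ∧ ¬ cnt L1 x % 2 = m % 2 := by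
  simp only [S1, mem_biUnion, mem_filter, mem_range, E, mem_univ, true_and]
  constructor
  · rintro ⟨i, ⟨-, hp⟩, hL, rfl⟩; exact ⟨hL, hp⟩
  · rintro ⟨hL, hp⟩; exact ⟨cnt L1 x, ⟨Nat.lt_succ_of_le (cnt_le _ _), hp⟩, hL, rfl⟩

lemma parity_eq {m : ℕ} {a b z : Fin m → G4} (ha : ∀ j, a j ∈ L1 ∪ L2)
    (hb : ∀ j, b j ∈ L1 ∪ L2) (hab : a - b = z) :
    (cnt L1 a + cnt L1 b) % 2 = (cnt N12 z + cnt N21 z) % 2 := by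
  have hz : ∀ i, z i = a i - b i := fun i => (congrFun hab i).symm
  unfold cnt
  rw [card_filter, card_filter, card_filter, card_filter, ← Finset.sum_add_distrib,
    ← Finset.sum_add_distrib, Finset.sum_nat_mod, Finset.sum_nat_mod univ 2
      (fun i => (if z i ∈ N12 then 1 else 0) + (if z i ∈ N21 then 1 else 0))]
  congr 1
  refine Finset.sum_congr rfl fun i _ => ?_
  rw [hz i]
  exact coord_parity _ _ (ha i) (hb i)

lemma count_partition {m : ℕ} {z : Fin m → G4} (hz : ∀ i, z i ∉ Zset) :
    (univ.filter fun i => z i = 0).card + (cnt N11 z + (cnt N12 z + cnt N21 z)) = m := by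
  unfold cnt
  rw [card_filter, card_filter, card_filter, card_filter, ← Finset.sum_add_distrib,
    ← Finset.sum_add_distrib, ← Finset.sum_add_distrib]
  calc (∑ i : Fin m, ((if z i = 0 then 1 else 0) + ((if z i ∈ N11 then 1 else 0)
        + ((if z i ∈ N12 then 1 else 0) + (if z i ∈ N21 then 1 else 0)))))
      = ∑ _i : Fin m, 1 := Finset.sum_congr rfl fun i _ => coord_partition _ (hz i)
    _ = m := by simp

/-- The full set of pairs with difference `z`. -/
def Dset (m : ℕ) (z : Fin m → G4) : Finset ((Fin m → G4) × (Fin m → G4)) :=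
  univ.filter fun p => (∀ j, p.1 j ∈ L1 ∪ L2) ∧ (∀ j, p.2 j ∈ L1 ∪ L2) ∧ p.1 - p.2 = z

lemma Dset_card {m : ℕ} {z : Fin m → G4} (hz : ∀ i, z i ∉ Zset) :
    (Dset m z).card = 4 ^ (univ.filter fun i => z i = 0).card := by
  have h1 : (Dset m z).card = (Fintype.piFinset fun i =>
      ((L1 ∪ L2) ×ˢ (L1 ∪ L2)).filter fun pq => pq.1 - pq.2 = z i).card := by
    refine card_bij' (fun p _ => fun i => (p.1 i, p.2 i))
      (fun f _ => (fun i => (f i).1, fun i => (f i).2)) ?_ ?_ (fun p _ => rfl) (fun f _ => rfl)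
    · intro p hp
      simp only [Dset, mem_filter, mem_univ, true_and] at hp
      simp only [Fintype.mem_piFinset, mem_filter, mem_product]
      intro i
      exact ⟨⟨hp.1 i, hp.2.1 i⟩, by rw [← hp.2.2]; rfl⟩
    · intro f hf
      simp only [Fintype.mem_piFinset, mem_filter, mem_product] at hf
      simp only [Dset, mem_filter, mem_univ, true_and]
      exact ⟨fun j => (hf j).1.1, fun j => (hf j).1.2, funext fun i => (hf i).2⟩
  rw [h1, Fintype.card_piFinset]
  calc (∏ i : Fin m, (((L1 ∪ L2) ×ˢ (L1 ∪ L2)).filter fun pq => pq.1 - pq.2 = z i).card)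
      = ∏ i : Fin m, (if z i = 0 then 4 else 1) :=
        Finset.prod_congr rfl fun i _ => coord_card _ (hz i)
    _ = 4 ^ (univ.filter fun i => z i = 0).card := by
        rw [← Finset.prod_filter_mul_prod_filter_not univ (fun i => z i = 0)]
        rw [Finset.prod_congr rfl (fun i hi => if_pos (mem_filter.mp hi).2),
          Finset.prod_congr rfl (fun i hi => if_neg (mem_filter.mp hi).2),
          Finset.prod_const, Finset.prod_const_one, mul_one]

theorem stmt14 (m : ℕ) (z : Fin m → G4) :
    ((∃ i, z i ∈ Zset) → nu (S0 m) z + nu (S1 m) z = 0) ∧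
    ((∀ i, z i ∉ Zset) →
      (((cnt N11 z + cnt N12 z) + (cnt N11 z + cnt N21 z)) % 2 = 1 →
        nu (S0 m) z + nu (S1 m) z = 0) ∧
      (((cnt N11 z + cnt N12 z) + (cnt N11 z + cnt N21 z)) % 2 = 0 →
        nu (S0 m) z + nu (S1 m) z =
          4 ^ (m + cnt N11 z - (cnt N11 z + cnt N12 z) - (cnt N11 z + cnt N21 z)))) := by
  constructor
  · rintro ⟨i, hi⟩
    have key : ∀ a b : Fin m → G4, (∀ j, a j ∈ L1 ∪ L2) → (∀ j, b j ∈ L1 ∪ L2) →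
        a - b ≠ z := by
      intro a b ha hb hab
      exact coord_diff _ _ (ha i) (hb i)
        (by rw [show a i - b i = z i from congrFun hab i]; exact hi)
    have h0 : nu (S0 m) z = 0 := by
      rw [nu, card_eq_zero, filter_eq_empty_iff]
      rintro ⟨a, b⟩ hab
      simp only [mem_product] at hab
      exact key a b (mem_S0.mp hab.1).1 (mem_S0.mp hab.2).1
    have h1 : nu (S1 m) z = 0 := by
      rw [nu, card_eq_zero, filter_eq_empty_iff]
      rintro ⟨a, b⟩ hab
      simp only [mem_product] at hab
      exact key a b (mem_S1.mp hab.1).1 (mem_S1.mp hab.2).1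
    rw [h0, h1]
  · intro hz
    constructor
    · intro hodd
      have hodd' : (cnt N12 z + cnt N21 z) % 2 = 1 := by omega
      have h0 : nu (S0 m) z = 0 := by
        rw [nu, card_eq_zero, filter_eq_empty_iff]
        rintro ⟨a, b⟩ hab hd
        simp only [mem_product] at hab
        obtain ⟨ha, hpa⟩ := mem_S0.mp hab.1
        obtain ⟨hb, hpb⟩ := mem_S0.mp hab.2
        have := parity_eq ha hb hd
        omega
      have h1 : nu (S1 m) z = 0 := by
        rw [nu, card_eq_zero, filter_eq_empty_iff]
        rintro ⟨a, b⟩ hab hd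
        simp only [mem_product] at hab
        obtain ⟨ha, hpa⟩ := mem_S1.mp hab.1
        obtain ⟨hb, hpb⟩ := mem_S1.mp hab.2
        have := parity_eq ha hb hd
        omega
      rw [h0, h1]
    · intro heven
      have heven' : (cnt N12 z + cnt N21 z) % 2 = 0 := by omega
      have e0 : ((S0 m ×ˢ S0 m).filter fun p => p.1 - p.2 = z)
          = (Dset m z).filter fun p => cnt L1 p.1 % 2 = m % 2 := by
        ext ⟨a, b⟩
        simp only [mem_filter, mem_product, Dset, mem_univ, true_and, mem_S0]
        constructor
        · rintro ⟨⟨⟨ha, hpa⟩, hb, hpb⟩, hd⟩; exact ⟨⟨ha, hb, hd⟩, hpa⟩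
        · rintro ⟨⟨ha, hb, hd⟩, hpa⟩
          have := parity_eq ha hb hd
          exact ⟨⟨⟨ha, hpa⟩, hb, by omega⟩, hd⟩
      have e1 : ((S1 m ×ˢ S1 m).filter fun p => p.1 - p.2 = z)
          = (Dset m z).filter fun p => ¬ cnt L1 p.1 % 2 = m % 2 := by
        ext ⟨a, b⟩
        simp only [mem_filter, mem_product, Dset, mem_univ, true_and, mem_S1]
        constructor
        · rintro ⟨⟨⟨ha, hpa⟩, hb, hpb⟩, hd⟩; exact ⟨⟨ha, hb, hd⟩, hpa⟩
        · rintro ⟨⟨ha, hb, hd⟩, hpa⟩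
          have := parity_eq ha hb hd
          exact ⟨⟨⟨ha, hpa⟩, hb, by omega⟩, hd⟩
      rw [nu, nu, e0, e1, card_filter_add_card_filter_not, Dset_card hz]
      have := count_partition hz
      congr 1
      omega
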